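/- Let (μ_n), μ be finite signed measures on ℝ. Then μ_n converges loosely to μ (∫ f dμ_n → ∫ f dμ for all continuous f vanishing at infinity) if and only if μ_n converges almost basically to μ and (μ_n) is uniformly bounded in variation: sup_n |μ_n|(ℝ) < ∞. -/

import Mathlib

open MeasureTheory Filter
open scoped ENNReal

/-- Integral of a function with respect to a finite signed measure, via the
Jordan decomposition. -/
noncomputable def sintegral (s : SignedMeasure ℝ) (f : ℝ → ℝ) : ℝ :=
  (∫ x, f x ∂s.toJordanDecomposition.posPart) -
    ∫ x, f x ∂s.toJordanDecomposition.negPart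

/-- Distribution function of a finite signed measure: `F^{(μ)}(x) = μ((-∞, x])`. -/
def DistF (s : SignedMeasure ℝ) : ℝ → ℝ := fun x => s (Set.Iic x)

/-- Almost basic convergence: every subsequence has a further subsequence along
which the differences `F_n(x) - F_n(y)` converge to `F(x) - F(y)` for all `x, y`
outside a Lebesgue-null set that may depend on the subsequence. -/
def AlmBasic (F : ℕ → ℝ → ℝ) (f : ℝ → ℝ) : Prop :=
  ∀ φ : ℕ → ℕ, StrictMono φ → ∃ ψ : ℕ → ℕ, StrictMono ψ ∧ ∃ S : Set ℝ,
    volume S = 0 ∧ ∀ x ∉ S, ∀ y ∉ S,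
      Tendsto (fun l => F (φ (ψ l)) x - F (φ (ψ l)) y) atTop (nhds (f x - f y))

namespace Stmt19
open Set Metric
open scoped Topology ZeroAtInfty Convolution




lemma sm_apply (s : SignedMeasure ℝ) {E : Set ℝ} (hE : MeasurableSet E) :
    s E = (s.toJordanDecomposition.posPart E).toReal - (s.toJordanDecomposition.negPart E).toReal := by
  conv_lhs => rw [← s.toSignedMeasure_toJordanDecomposition]
  rw [JordanDecomposition.toSignedMeasure, VectorMeasure.sub_apply,
    Measure.toSignedMeasure_apply_measurable hE, Measure.toSignedMeasure_apply_measurable hE]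
  rfl

lemma tv_apply (s : SignedMeasure ℝ) (E : Set ℝ) :
    s.totalVariation E = s.toJordanDecomposition.posPart E + s.toJordanDecomposition.negPart E := rfl

lemma tv_ne_top (s : SignedMeasure ℝ) (E : Set ℝ) : s.totalVariation E ≠ ⊤ := by
  rw [tv_apply]
  exact ENNReal.add_ne_top.2 ⟨measure_ne_top _ _, measure_ne_top _ _⟩

lemma tv_toReal (s : SignedMeasure ℝ) (E : Set ℝ) :
    (s.totalVariation E).toReal = (s.toJordanDecomposition.posPart E).toReal + (s.toJordanDecomposition.negPart E).toReal := by
  rw [tv_apply, ENNReal.toReal_add (measure_ne_top _ _) (measure_ne_top _ _)]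

lemma tv_toReal_mono (s : SignedMeasure ℝ) {E F : Set ℝ} (h : E ⊆ F) :
    (s.totalVariation E).toReal ≤ (s.totalVariation F).toReal :=
  ENNReal.toReal_mono (tv_ne_top s F) (measure_mono h)

lemma abs_apply_le (s : SignedMeasure ℝ) {E : Set ℝ} (hE : MeasurableSet E) :
    |s E| ≤ (s.totalVariation Set.univ).toReal := by
  rw [sm_apply s hE, tv_toReal]
  have h1 : (s.toJordanDecomposition.posPart E).toReal ≤ (s.toJordanDecomposition.posPart Set.univ).toReal :=
    ENNReal.toReal_mono (measure_ne_top _ _) (measure_mono (Set.subset_univ E))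
  have h2 : (s.toJordanDecomposition.negPart E).toReal ≤ (s.toJordanDecomposition.negPart Set.univ).toReal :=
    ENNReal.toReal_mono (measure_ne_top _ _) (measure_mono (Set.subset_univ E))
  have := ENNReal.toReal_nonneg (a := s.toJordanDecomposition.posPart E)
  have := ENNReal.toReal_nonneg (a := s.toJordanDecomposition.negPart E)
  rw [abs_sub_le_iff]
  constructor <;> linarith

lemma sintegral_bound (s : SignedMeasure ℝ) {f : ℝ → ℝ} {M : ℝ} (hM : ∀ x, |f x| ≤ M) :
    |sintegral s f| ≤ M * (s.totalVariation Set.univ).toReal := by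
  have h1 : ‖∫ x, f x ∂s.toJordanDecomposition.posPart‖ ≤ M * (s.toJordanDecomposition.posPart Set.univ).toReal :=
    norm_integral_le_of_norm_le_const (ae_of_all _ fun x => by simpa using hM x)
  have h2 : ‖∫ x, f x ∂s.toJordanDecomposition.negPart‖ ≤ M * (s.toJordanDecomposition.negPart Set.univ).toReal :=
    norm_integral_le_of_norm_le_const (ae_of_all _ fun x => by simpa using hM x)
  rw [Real.norm_eq_abs] at h1 h2
  rw [tv_toReal]
  calc |sintegral s f| ≤ |∫ x, f x ∂s.toJordanDecomposition.posPart| + |∫ x, f x ∂s.toJordanDecomposition.negPart| := abs_sub _ _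
    _ ≤ M * (s.toJordanDecomposition.posPart Set.univ).toReal + M * (s.toJordanDecomposition.negPart Set.univ).toReal := add_le_add h1 h2
    _ = M * ((s.toJordanDecomposition.posPart Set.univ).toReal + (s.toJordanDecomposition.negPart Set.univ).toReal) := by ring

/-- integrability of bounded continuous functions wrt the parts -/
lemma integrable_parts {f : ℝ → ℝ} (hf : Continuous f)
    (h0 : Tendsto f (cocompact ℝ) (nhds 0)) (m : Measure ℝ) [IsFiniteMeasure m] :
    Integrable f m := by
  have : ∃ C, ∀ x, |f x| ≤ C := by
    obtain ⟨K, hK, hKf⟩ := (hasBasis_cocompact.tendsto_iff Metric.nhds_basis_closedBall).1 h0 1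
      one_pos
    obtain ⟨C, hC⟩ := (hK.image hf.norm).bddAbove
    refine ⟨max C 1, fun x => ?_⟩
    by_cases hx : x ∈ K
    · exact le_trans (le_of_eq (Real.norm_eq_abs _).symm)
        (le_max_of_le_left (hC ⟨x, hx, rfl⟩))
    · have := hKf x hx
      simp only [Metric.mem_closedBall, dist_zero_right, Real.norm_eq_abs] at this
      exact le_max_of_le_right this
  obtain ⟨C, hC⟩ := this
  exact Integrable.mono' (integrable_const C) hf.aestronglyMeasurable
    (ae_of_all _ fun x => by simpa using hC x)

lemma sintegral_sub (s : SignedMeasure ℝ) {f g : ℝ → ℝ}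
    (hfp : Integrable f (s.toJordanDecomposition.posPart)) (hfn : Integrable f (s.toJordanDecomposition.negPart))
    (hgp : Integrable g (s.toJordanDecomposition.posPart)) (hgn : Integrable g (s.toJordanDecomposition.negPart)) :
    sintegral s (fun x => f x - g x) = sintegral s f - sintegral s g := by
  unfold sintegral
  rw [integral_sub hfp hgp, integral_sub hfn hgn]
  ring


section IBP
variable {f : ℝ → ℝ}

lemma eventually_zero_atTop (hsupp : HasCompactSupport f) : ∀ᶠ x in atTop, f x = 0 := by
  obtain ⟨R, hR⟩ := hsupp.isBounded.subset_closedBall 0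
  filter_upwards [eventually_gt_atTop R] with x hx
  by_contra hfx
  have : x ∈ tsupport f := subset_tsupport f hfx
  have := hR this
  simp only [Metric.mem_closedBall, dist_zero_right, Real.norm_eq_abs] at this
  have := le_abs_self x
  linarith

lemma integral_Ici_deriv (hf : ContDiff ℝ 1 f) (hsupp : HasCompactSupport f) (t : ℝ) :
    ∫ x in Set.Ici t, deriv f x = - f t := by
  rw [MeasureTheory.integral_Ici_eq_integral_Ioi]
  have hderiv : ∀ x ∈ Set.Ioi t, HasDerivAt f (deriv f x) x := fun x _ =>
    (hf.differentiable one_ne_zero x).hasDerivAt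
  have hcontderiv : Continuous (deriv f) := hf.continuous_deriv le_rfl
  have hint : IntegrableOn (deriv f) (Set.Ioi t) volume :=
    (hcontderiv.integrable_of_hasCompactSupport hsupp.deriv).integrableOn
  have htend : Tendsto f atTop (nhds 0) :=
    Tendsto.congr' (((eventually_zero_atTop hsupp).mono fun x hx => hx.symm)) tendsto_const_nhds
  rw [MeasureTheory.integral_Ioi_of_hasDerivAt_of_tendsto
    (hf.continuous.continuousWithinAt) hderiv hint htend]
  ring

lemma integral_deriv_zero (hf : ContDiff ℝ 1 f) (hsupp : HasCompactSupport f) :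
    ∫ x, deriv f x = 0 := by
  obtain ⟨R, hR⟩ := hsupp.isBounded.subset_closedBall 0
  have h1 : ∀ x ∉ Set.Ici (-(R + 1)), deriv f x = 0 := by
    intro x hx
    simp only [Set.mem_Ici, not_le] at hx
    by_contra h
    have : x ∈ tsupport f := support_deriv_subset (by simpa using h)
    have := hR this
    simp only [Metric.mem_closedBall, dist_zero_right, Real.norm_eq_abs] at this
    have := neg_abs_le x
    linarith
  have h2 : f (-(R + 1)) = 0 := by
    by_contra h
    have : -(R+1) ∈ tsupport f := subset_tsupport f h
    have := hR this
    simp only [Metric.mem_closedBall, dist_zero_right, Real.norm_eq_abs] at this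
    rw [abs_neg, abs_of_nonneg (by linarith [abs_nonneg (R+1), (abs_nonneg (-(R+1) : ℝ))] : (0:ℝ) ≤ R + 1)] at this
    linarith
  rw [← MeasureTheory.setIntegral_eq_integral_of_forall_compl_eq_zero h1,
    integral_Ici_deriv hf hsupp, h2, neg_zero]

/-- Integration by parts against a finite measure. -/
lemma integral_eq_neg_integral_deriv (hf : ContDiff ℝ 1 f) (hsupp : HasCompactSupport f)
    (m : Measure ℝ) [IsFiniteMeasure m] :
    ∫ t, f t ∂m = - ∫ x, deriv f x * (m (Set.Iic x)).toReal := by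
  have hcontderiv : Continuous (deriv f) := hf.continuous_deriv le_rfl
  have hintd : Integrable (deriv f) volume :=
    hcontderiv.integrable_of_hasCompactSupport hsupp.deriv
  set F : ℝ → ℝ → ℝ := fun t x => Set.indicator (Set.Ici t) (deriv f) x with hF
  have hmeas : MeasurableSet {p : ℝ × ℝ | p.1 ≤ p.2} := measurableSet_le measurable_fst measurable_snd
  have hFmeas : AEStronglyMeasurable (Function.uncurry F) (m.prod volume) := by
    have : Function.uncurry F = Set.indicator {p : ℝ × ℝ | p.1 ≤ p.2} (fun p => deriv f p.2) := by
      ext p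
      simp only [Function.uncurry, hF, Set.indicator]
      by_cases h : p.1 ≤ p.2 <;> simp [Set.mem_Ici, h]
    rw [this]
    exact ((hcontderiv.measurable.comp measurable_snd).indicator hmeas).aestronglyMeasurable
  have hdom : Integrable (fun z : ℝ × ℝ => (1:ℝ) * |deriv f z.2|) (m.prod volume) :=
    Integrable.mul_prod (integrable_const 1) hintd.abs
  have hFint : Integrable (Function.uncurry F) (m.prod volume) := by
    refine Integrable.mono' (by simpa using hdom) hFmeas (ae_of_all _ fun p => ?_)
    simp only [Function.uncurry, hF, one_mul]
    exact (norm_indicator_le_norm_self _ _).trans_eq (Real.norm_eq_abs _)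
  have swap := MeasureTheory.integral_integral_swap hFint
  have lhs : ∀ t, (∫ x, F t x) = - f t := by
    intro t
    simp only [hF]
    rw [MeasureTheory.integral_indicator measurableSet_Ici]
    exact integral_Ici_deriv hf hsupp t
  have rhs : ∀ x, (∫ t, F t x ∂m) = deriv f x * (m (Set.Iic x)).toReal := by
    intro t
    have h : (fun s => F s t) = Set.indicator (Set.Iic t) (fun _ => deriv f t) := by
      funext s
      by_cases h : s ≤ t
      · simp [hF, Set.indicator, h]
      · simp [hF, Set.indicator, h]
    rw [h, MeasureTheory.integral_indicator_const _ measurableSet_Iic, smul_eq_mul]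
    exact mul_comm _ _
  have h1 : (fun t => f t) = fun t => -(∫ x, F t x) := funext fun t => by rw [lhs t, neg_neg]
  calc ∫ t, f t ∂m = ∫ t, -(∫ x, F t x) ∂m := by rw [← h1]
    _ = - ∫ t, (∫ x, F t x) ∂m := integral_neg _
    _ = - ∫ x, (∫ t, F t x ∂m) := by rw [swap]
    _ = - ∫ x, deriv f x * (m (Set.Iic x)).toReal := by
        rw [show (fun x => ∫ t, F t x ∂m) = fun x => deriv f x * (m (Set.Iic x)).toReal from
          funext fun x => rhs x]

end IBP

section P3
variable {f : ℝ → ℝ}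

lemma integrable_deriv_mul (hf : ContDiff ℝ 1 f) (hsupp : HasCompactSupport f)
    (m : Measure ℝ) [IsFiniteMeasure m] :
    Integrable (fun x => deriv f x * (m (Set.Iic x)).toReal) volume := by
  have hcontderiv : Continuous (deriv f) := hf.continuous_deriv le_rfl
  have hintd : Integrable (deriv f) volume :=
    hcontderiv.integrable_of_hasCompactSupport hsupp.deriv
  have hmono : Monotone (fun x => (m (Set.Iic x)).toReal) := fun x y h =>
    ENNReal.toReal_mono (measure_ne_top _ _) (measure_mono (Set.Iic_subset_Iic.2 h))
  refine Integrable.mono' (hintd.abs.mul_const (m Set.univ).toReal)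
    ((hcontderiv.measurable.mul hmono.measurable).aestronglyMeasurable)
    (ae_of_all _ fun x => ?_)
  rw [Real.norm_eq_abs, abs_mul]
  refine mul_le_mul_of_nonneg_left ?_ (abs_nonneg _)
  rw [abs_of_nonneg ENNReal.toReal_nonneg]
  exact ENNReal.toReal_mono (measure_ne_top _ _) (measure_mono (Set.subset_univ _))

lemma sintegral_ibp (s : SignedMeasure ℝ) (hf : ContDiff ℝ 1 f) (hsupp : HasCompactSupport f)
    (c : ℝ) :
    sintegral s f = - ∫ x, deriv f x * (DistF s x - c) := by
  have hcontderiv : Continuous (deriv f) := hf.continuous_deriv le_rfl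
  have hintd : Integrable (deriv f) volume :=
    hcontderiv.integrable_of_hasCompactSupport hsupp.deriv
  have hp := integrable_deriv_mul hf hsupp s.toJordanDecomposition.posPart
  have hn := integrable_deriv_mul hf hsupp s.toJordanDecomposition.negPart
  have key : (fun x => deriv f x * (DistF s x - c)) = fun x =>
      (deriv f x * (s.toJordanDecomposition.posPart (Set.Iic x)).toReal
        - deriv f x * (s.toJordanDecomposition.negPart (Set.Iic x)).toReal)
        - c * deriv f x := by
    funext x
    rw [DistF, sm_apply s measurableSet_Iic]
    ring
  have e1 : ∫ x, ((deriv f x * (s.toJordanDecomposition.posPart (Set.Iic x)).toReal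
        - deriv f x * (s.toJordanDecomposition.negPart (Set.Iic x)).toReal)
        - c * deriv f x) =
      (∫ x, (deriv f x * (s.toJordanDecomposition.posPart (Set.Iic x)).toReal
        - deriv f x * (s.toJordanDecomposition.negPart (Set.Iic x)).toReal)) -
      ∫ x, c * deriv f x := integral_sub (hp.sub hn) (hintd.const_mul c)
  have e2 : ∫ x, (deriv f x * (s.toJordanDecomposition.posPart (Set.Iic x)).toReal
        - deriv f x * (s.toJordanDecomposition.negPart (Set.Iic x)).toReal) =
      (∫ x, deriv f x * (s.toJordanDecomposition.posPart (Set.Iic x)).toReal) -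
      ∫ x, deriv f x * (s.toJordanDecomposition.negPart (Set.Iic x)).toReal :=
    integral_sub hp hn
  rw [sintegral, integral_eq_neg_integral_deriv hf hsupp s.toJordanDecomposition.posPart,
    integral_eq_neg_integral_deriv hf hsupp s.toJordanDecomposition.negPart, key, e1, e2,
    integral_const_mul, integral_deriv_zero hf hsupp]
  ring

end P3

/-- compactly supported continuous functions tend to 0 at cocompact -/
lemma tendsto_cocompact_of_compactSupport {f : ℝ → ℝ} (hf : HasCompactSupport f) :
    Tendsto f (cocompact ℝ) (nhds 0) := by
  apply Tendsto.congr' (f₁ := fun _ => (0:ℝ))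
  · have : (tsupport f)ᶜ ∈ cocompact ℝ := mem_cocompact.2 ⟨tsupport f, hf, le_refl _⟩
    filter_upwards [this] with x hx
    exact (image_eq_zero_of_notMem_tsupport hx).symm
  · exact tendsto_const_nhds

/-- Density: continuous functions vanishing at infinity are uniformly approximated by
C¹ compactly supported functions. -/
lemma exists_contDiff_approx {f : ℝ → ℝ} (hf : Continuous f)
    (h0 : Tendsto f (cocompact ℝ) (nhds 0)) {ε : ℝ} (hε : 0 < ε) :
    ∃ g : ℝ → ℝ, ContDiff ℝ 1 g ∧ HasCompactSupport g ∧ ∀ x, |f x - g x| ≤ ε := by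
  -- step 1 : truncate
  obtain ⟨K, hK, hKf⟩ := (hasBasis_cocompact.tendsto_iff Metric.nhds_basis_closedBall).1 h0
    (ε/2) (by linarith)
  obtain ⟨R, hRpos, hKR⟩ := hK.isBounded.subset_closedBall_lt 0 0
  obtain ⟨χ, hχ1, hχ0, hχc, hχmem⟩ := exists_continuous_one_zero_of_isCompact
    (isCompact_closedBall (0:ℝ) R) (Metric.isOpen_ball (x := (0:ℝ)) (ε := R+1)).isClosed_compl
    (Set.disjoint_compl_right_iff_subset.2 (closedBall_subset_ball (by linarith)))
  set f1 : ℝ → ℝ := fun x => f x * χ x with hf1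
  have hf1c : Continuous f1 := hf.mul χ.continuous
  have hf1supp : HasCompactSupport f1 := by
    apply HasCompactSupport.mul_left hχc
  have hf1close : ∀ x, |f x - f1 x| ≤ ε/2 := by
    intro x
    by_cases hx : x ∈ Metric.closedBall (0:ℝ) R
    · rw [hf1]
      simp only [hχ1 hx, Pi.one_apply, mul_one, sub_self, abs_zero]
      linarith
    · have hfx : |f x| ≤ ε/2 := by
        have := hKf x (fun hxK => hx (hKR hxK))
        simpa [Real.norm_eq_abs, dist_zero_right] using this
      have heq : |f x - f1 x| = |f x| * |1 - χ x| := by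
        rw [hf1, ← abs_mul]
        ring_nf
      have hχx : |1 - χ x| ≤ 1 := by
        obtain ⟨h1, h2⟩ := hχmem x
        rw [abs_le]; constructor <;> linarith
      calc |f x - f1 x| = |f x| * |1 - χ x| := heq
        _ ≤ (ε/2) * 1 := mul_le_mul hfx hχx (abs_nonneg _) (by linarith)
        _ = ε/2 := mul_one _
  -- step 2 : mollify
  have hf1u : UniformContinuous f1 :=
    hf1c.uniformContinuous_of_tendsto_cocompact (tendsto_cocompact_of_compactSupport hf1supp)
  obtain ⟨δ, hδpos, hδ⟩ := Metric.uniformContinuous_iff.1 hf1u (ε/2) (by linarith)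
  set φ : ContDiffBump (0:ℝ) := ⟨δ/2, δ, half_pos hδpos, half_lt_self hδpos⟩ with hφ
  set g : ℝ → ℝ := convolution (φ.normed volume) f1 (ContinuousLinearMap.lsmul ℝ ℝ) volume
    with hg
  refine ⟨g, ?_, ?_, ?_⟩
  · exact HasCompactSupport.contDiff_convolution_left _ φ.hasCompactSupport_normed
      φ.contDiff_normed hf1c.locallyIntegrable
  · exact HasCompactSupport.convolution _ φ.hasCompactSupport_normed hf1supp
  · intro x
    have hgx : dist (g x) (f1 x) ≤ ε/2 := by
      refine ContDiffBump.dist_normed_convolution_le hf1c.aestronglyMeasurable ?_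
      intro y hy
      have : dist y x < δ := by simpa [hφ] using hy
      exact le_of_lt (hδ this)
    have : |f x - g x| ≤ |f x - f1 x| + |f1 x - g x| := abs_sub_le _ _ _
    have hd : |f1 x - g x| ≤ ε/2 := by
      rw [abs_sub_comm, ← Real.dist_eq]
      exact hgx
    linarith [hf1close x]



/-- the signed measure as a continuous linear functional on C₀ -/
noncomputable def toCLM (s : SignedMeasure ℝ) : C₀(ℝ, ℝ) →L[ℝ] ℝ := by
  refine LinearMap.mkContinuous
    { toFun := fun f => sintegral s f
      map_add' := ?_
      map_smul' := ?_ } ((s.totalVariation Set.univ).toReal) ?_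
  · intro f g
    unfold sintegral
    have h1 := integrable_parts f.continuous f.zero_at_infty' s.toJordanDecomposition.posPart
    have h2 := integrable_parts f.continuous f.zero_at_infty' s.toJordanDecomposition.negPart
    have h3 := integrable_parts g.continuous g.zero_at_infty' s.toJordanDecomposition.posPart
    have h4 := integrable_parts g.continuous g.zero_at_infty' s.toJordanDecomposition.negPart
    have e1 : ∫ x, (f + g) x ∂s.toJordanDecomposition.posPart
        = (∫ x, f x ∂s.toJordanDecomposition.posPart) + ∫ x, g x ∂s.toJordanDecomposition.posPart := by
      simp only [ZeroAtInftyContinuousMap.coe_add, Pi.add_apply]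
      exact integral_add h1 h3
    have e2 : ∫ x, (f + g) x ∂s.toJordanDecomposition.negPart
        = (∫ x, f x ∂s.toJordanDecomposition.negPart) + ∫ x, g x ∂s.toJordanDecomposition.negPart := by
      simp only [ZeroAtInftyContinuousMap.coe_add, Pi.add_apply]
      exact integral_add h2 h4
    rw [e1, e2]; ring
  · intro c f
    unfold sintegral
    simp only [ZeroAtInftyContinuousMap.coe_smul, Pi.smul_apply, smul_eq_mul,
      integral_const_mul, RingHom.id_apply]
    ring
  · intro f
    simp only [LinearMap.coe_mk, AddHom.coe_mk]
    rw [Real.norm_eq_abs, mul_comm]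
    refine sintegral_bound s fun x => ?_
    rw [← Real.norm_eq_abs]
    calc ‖f x‖ ≤ ‖f.toBCF‖ := f.toBCF.norm_coe_le_norm x
      _ = ‖f‖ := ZeroAtInftyContinuousMap.norm_toBCF_eq_norm

lemma toCLM_apply (s : SignedMeasure ℝ) (f : C₀(ℝ, ℝ)) : toCLM s f = sintegral s f := rfl

/-- UBP step -/
lemma exists_norm_bound (μ : ℕ → SignedMeasure ℝ)
    (h : ∀ f : C₀(ℝ, ℝ), ∃ b : ℝ, Tendsto (fun n => sintegral (μ n) f) atTop (nhds b)) :
    ∃ C : ℝ, 0 ≤ C ∧ ∀ n, ∀ f : C₀(ℝ, ℝ), ‖f‖ ≤ 1 → |sintegral (μ n) f| ≤ C := by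
  have hb : ∀ f : C₀(ℝ, ℝ), ∃ C, ∀ n, ‖toCLM (μ n) f‖ ≤ C := by
    intro f
    obtain ⟨b, hb⟩ := h f
    obtain ⟨C, hC⟩ := hb.norm.bddAbove_range
    exact ⟨C, fun n => hC ⟨n, rfl⟩⟩
  obtain ⟨C, hC⟩ := banach_steinhaus hb
  refine ⟨max C 0, le_max_right _ _, fun n f hf => ?_⟩
  rw [← Real.norm_eq_abs, ← toCLM_apply]
  calc ‖toCLM (μ n) f‖ ≤ ‖toCLM (μ n)‖ * ‖f‖ := (toCLM (μ n)).le_opNorm f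
    _ ≤ max C 0 * 1 := by
        refine mul_le_mul (le_trans (hC n) (le_max_left _ _)) hf (norm_nonneg _) (le_max_right _ _)
    _ = max C 0 := mul_one _




lemma clamp_close {a b : ℝ} (h1 : -1 ≤ a) (h2 : a ≤ 1) :
    |a - max (-1) (min 1 b)| ≤ |a - b| := by
  rcases le_total 1 b with hb | hb
  · rw [min_eq_left hb, max_eq_right (by norm_num : (-1:ℝ) ≤ 1)]
    rw [abs_of_nonpos (by linarith), abs_of_nonpos (by linarith)]
    linarith
  · rcases le_total b (-1) with hb' | hb'
    · rw [min_eq_right hb, max_eq_left hb']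
      rw [abs_of_nonneg (by linarith), abs_of_nonneg (by linarith)]
      linarith
    · rw [min_eq_right hb, max_eq_right hb']

lemma tv_le_of_bound (s : SignedMeasure ℝ) {C : ℝ}
    (h : ∀ f : C₀(ℝ, ℝ), ‖f‖ ≤ 1 → |sintegral s f| ≤ C) :
    s.totalVariation Set.univ ≤ ENNReal.ofReal (C + 2) := by
  set p : Measure ℝ := s.toJordanDecomposition.posPart with hp
  set n : Measure ℝ := s.toJordanDecomposition.negPart with hn
  have htv : s.totalVariation = p + n := rfl
  obtain ⟨i, hi₁, hi₂, hi₃, hipos, hineg⟩ := s.toJordanDecomposition_spec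
  set φ : ℝ → ℝ := fun x => Set.indicator i (fun _ => 1) x - Set.indicator iᶜ (fun _ => 1) x
    with hφ
  have hφmeas : Measurable φ :=
    (measurable_const.indicator hi₁).sub (measurable_const.indicator hi₁.compl)
  have hφbd : ∀ x, |φ x| ≤ 1 := by
    intro x
    by_cases hx : x ∈ i <;> simp [hφ, Set.indicator, hx]
  have hφint : ∀ m : Measure ℝ, IsFiniteMeasure m → Integrable φ m := fun m hm =>
    Integrable.mono' (integrable_const 1) hφmeas.aestronglyMeasurable
      (ae_of_all _ fun x => by simpa using hφbd x)
  -- p iᶜ = 0, n i = 0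
  have hpic : p iᶜ = 0 := by
    rw [hp, hipos, SignedMeasure.toMeasureOfZeroLE_apply s hi₂ hi₁ hi₁.compl]
    simp
  have hni : n i = 0 := by
    rw [hn, hineg, SignedMeasure.toMeasureOfLEZero_apply s hi₃ hi₁.compl hi₁]
    simp
  -- ∫ φ dp = (p univ).toReal
  have hsplit : ∀ m : Measure ℝ, IsFiniteMeasure m →
      ∫ x, φ x ∂m = (m i).toReal - (m iᶜ).toReal := by
    intro m hm
    rw [hφ]
    rw [integral_sub ((integrable_const (1:ℝ)).indicator hi₁)
      ((integrable_const (1:ℝ)).indicator hi₁.compl),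
      integral_indicator_const _ hi₁, integral_indicator_const _ hi₁.compl]
    simp
    rfl
  have hpuniv : p Set.univ = p i := by
    have : p Set.univ = p i + p iᶜ := by
      rw [← measure_union (disjoint_compl_right) hi₁.compl, Set.union_compl_self]
    rw [this, hpic, add_zero]
  have hnuniv : n Set.univ = n iᶜ := by
    have : n Set.univ = n i + n iᶜ := by
      rw [← measure_union (disjoint_compl_right) hi₁.compl, Set.union_compl_self]
    rw [this, hni, zero_add]
  have hφp : ∫ x, φ x ∂p = (p Set.univ).toReal := by
    rw [hsplit p inferInstance, hpic, hpuniv]; simp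
  have hφn : ∫ x, φ x ∂n = -(n Set.univ).toReal := by
    rw [hsplit n inferInstance, hni, hnuniv]; simp
  -- approximate φ in L¹(tv)
  haveI hfin : IsFiniteMeasure s.totalVariation := by
    constructor
    rw [htv, Measure.add_apply]
    exact ENNReal.add_lt_top.2 ⟨measure_lt_top _ _, measure_lt_top _ _⟩
  have hφmem : MemLp φ 1 s.totalVariation := memLp_one_iff_integrable.2 (hφint _ inferInstance)
  obtain ⟨g, hgsupp, hgnorm, hgcont, -⟩ :=
    hφmem.exists_hasCompactSupport_eLpNorm_sub_le (p := 1) (by norm_num)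
      (ε := 1) (by norm_num)
  set ch : ℝ → ℝ := fun x => max (-1) (min 1 (g x)) with hch
  have hchcont : Continuous ch := continuous_const.max (continuous_const.min hgcont)
  have hchsupp : HasCompactSupport ch := by
    refine HasCompactSupport.intro hgsupp fun x hx => ?_
    have : g x = 0 := image_eq_zero_of_notMem_tsupport hx
    simp [hch, this]
  have hchbd : ∀ x, |ch x| ≤ 1 := by
    intro x
    rw [abs_le]
    constructor
    · exact le_max_left _ _
    · exact max_le (by norm_num) (min_le_left _ _)
  have hclose : ∀ x, |φ x - ch x| ≤ |φ x - g x| := fun x =>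
    clamp_close (abs_le.1 (hφbd x)).1 (abs_le.1 (hφbd x)).2
  -- bundle ch
  set H : C₀(ℝ, ℝ) := ⟨⟨ch, hchcont⟩, tendsto_cocompact_of_compactSupport hchsupp⟩ with hH
  have hHnorm : ‖H‖ ≤ 1 := by
    rw [← ZeroAtInftyContinuousMap.norm_toBCF_eq_norm]
    rw [BoundedContinuousFunction.norm_le zero_le_one]
    intro x
    exact (hchbd x)
  have hHint := h H hHnorm
  -- the L¹ error bound
  have hgint : Integrable g s.totalVariation := by
    refine hgcont.integrable_of_hasCompactSupport hgsupp
  have hchint : Integrable ch s.totalVariation := hchcont.integrable_of_hasCompactSupport hchsupp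
  have herr : ∫ x, |φ x - ch x| ∂s.totalVariation ≤ 1 := by
    have h1 : ∫ x, |φ x - ch x| ∂s.totalVariation ≤ ∫ x, |φ x - g x| ∂s.totalVariation := by
      refine integral_mono ((hφint _ inferInstance).sub hchint).abs
        ((hφint _ inferInstance).sub hgint).abs hclose
    have h2 : ∫ x, |φ x - g x| ∂s.totalVariation ≤ 1 := by
      have he : ∫ x, |φ x - g x| ∂s.totalVariation
          = (∫⁻ x, ‖(φ - g) x‖ₑ ∂s.totalVariation).toReal := by
        rw [← integral_norm_eq_lintegral_enorm
          ((hφint _ inferInstance).sub hgint).aestronglyMeasurable]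
        simp [Real.norm_eq_abs]
      rw [he, ← eLpNorm_one_eq_lintegral_enorm]
      calc (eLpNorm (φ - g) 1 s.totalVariation).toReal ≤ (1 : ℝ≥0∞).toReal :=
            ENNReal.toReal_mono (by norm_num) hgnorm
        _ = 1 := by simp
    linarith
  -- split the error over p and n
  have A : Integrable (fun x => |φ x - ch x|) p :=
    ((hφint p inferInstance).sub (hchcont.integrable_of_hasCompactSupport hchsupp)).abs
  have B : Integrable (fun x => |φ x - ch x|) n :=
    ((hφint n inferInstance).sub (hchcont.integrable_of_hasCompactSupport hchsupp)).abs
  have herrsplit : (∫ x, |φ x - ch x| ∂p) + (∫ x, |φ x - ch x| ∂n)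
      = ∫ x, |φ x - ch x| ∂s.totalVariation := by
    rw [htv, integral_add_measure A B]
  have habs1 : |(∫ x, φ x ∂p) - ∫ x, ch x ∂p| ≤ ∫ x, |φ x - ch x| ∂p := by
    rw [← integral_sub (hφint p inferInstance) (hchcont.integrable_of_hasCompactSupport hchsupp)]
    simpa [Real.norm_eq_abs] using
      norm_integral_le_integral_norm (μ := p) (f := fun x => φ x - ch x)
  have habs2 : |(∫ x, φ x ∂n) - ∫ x, ch x ∂n| ≤ ∫ x, |φ x - ch x| ∂n := by
    rw [← integral_sub (hφint n inferInstance) (hchcont.integrable_of_hasCompactSupport hchsupp)]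
    simpa [Real.norm_eq_abs] using
      norm_integral_le_integral_norm (μ := n) (f := fun x => φ x - ch x)
  -- conclude
  have hsH : sintegral s H = (∫ x, ch x ∂p) - ∫ x, ch x ∂n := rfl
  have hkey : (s.totalVariation Set.univ).toReal ≤ C + 2 := by
    have htvval : (s.totalVariation Set.univ).toReal
        = (∫ x, φ x ∂p) - ∫ x, φ x ∂n := by
      rw [hφp, hφn, htv]
      rw [Measure.add_apply, ENNReal.toReal_add (measure_ne_top _ _) (measure_ne_top _ _)]
      ring
    have hHbd : |sintegral s H| ≤ C := hHint
    rw [htvval]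
    have e1 : (∫ x, φ x ∂p) - ∫ x, φ x ∂n
        = ((∫ x, φ x ∂p) - ∫ x, ch x ∂p) - ((∫ x, φ x ∂n) - ∫ x, ch x ∂n)
          + sintegral s H := by
      rw [hsH]; ring
    have := abs_le.1 hHbd
    have h2 : ((∫ x, φ x ∂p) - ∫ x, ch x ∂p) ≤ ∫ x, |φ x - ch x| ∂p :=
      le_trans (le_abs_self _) habs1
    have h3 : -(((∫ x, φ x ∂n) - ∫ x, ch x ∂n)) ≤ ∫ x, |φ x - ch x| ∂n :=
      le_trans (neg_le_abs _) habs2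
    have h4 : (∫ x, |φ x - ch x| ∂p) + (∫ x, |φ x - ch x| ∂n) ≤ 1 := by
      rw [herrsplit]; exact herr
    linarith
  calc s.totalVariation Set.univ = ENNReal.ofReal ((s.totalVariation Set.univ).toReal) := by
        rw [ENNReal.ofReal_toReal]
        rw [htv]
        exact ENNReal.add_ne_top.2 ⟨measure_ne_top _ _, measure_ne_top _ _⟩
    _ ≤ ENNReal.ofReal (C + 2) := ENNReal.ofReal_le_ofReal hkey




/-- diagonal-free extraction via compactness of the Hilbert cube -/
lemma exists_subseq_tendsto_rat {G : ℕ → ℚ → ℝ} {B : ℝ}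
    (hG : ∀ n q, G n q ∈ Set.Icc (0:ℝ) B) :
    ∃ ψ : ℕ → ℕ, StrictMono ψ ∧ ∃ L : ℚ → ℝ, (∀ q, L q ∈ Set.Icc (0:ℝ) B) ∧
      ∀ q, Tendsto (fun l => G (ψ l) q) atTop (nhds (L q)) := by
  have hcomp : IsCompact (Set.pi Set.univ fun _ : ℚ => Set.Icc (0:ℝ) B) :=
    isCompact_univ_pi fun _ => isCompact_Icc
  have hmem : ∀ n, G n ∈ Set.pi Set.univ fun _ : ℚ => Set.Icc (0:ℝ) B := fun n q _ => hG n q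
  obtain ⟨L, hL, ψ, hψ, htend⟩ := hcomp.tendsto_subseq hmem
  refine ⟨ψ, hψ, L, fun q => hL q (Set.mem_univ q), fun q => ?_⟩
  exact (tendsto_pi_nhds.1 htend) q

/-- the upper envelope of the rational limit -/
noncomputable def envel (L : ℚ → ℝ) (x : ℝ) : ℝ := sInf (L '' {q : ℚ | x < (q:ℝ)})

lemma envel_mono {L : ℚ → ℝ} (h0 : ∀ q, 0 ≤ L q) (hL : Monotone L) : Monotone (envel L) := by
  intro a b hab
  refine le_csInf ?_ ?_
  · obtain ⟨q, hq⟩ := exists_rat_gt b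
    exact ⟨L q, ⟨q, hq, rfl⟩⟩
  · rintro r ⟨q, hq, rfl⟩
    refine csInf_le ⟨0, ?_⟩ ⟨q, lt_of_le_of_lt hab hq, rfl⟩
    rintro r ⟨q', _, rfl⟩
    exact h0 q'

lemma envel_le {L : ℚ → ℝ} (h0 : ∀ q, 0 ≤ L q) {x : ℝ} {q : ℚ} (hq : x < (q:ℝ)) :
    envel L x ≤ L q := by
  refine csInf_le ⟨0, ?_⟩ ⟨q, hq, rfl⟩
  rintro r ⟨q', _, rfl⟩
  exact h0 q'

/-- key consequence of continuity of the envelope -/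
lemma exists_rat_near' {L : ℚ → ℝ} (h0 : ∀ q, 0 ≤ L q) (hL : Monotone L) {z : ℝ}
    (hc : ContinuousAt (envel L) z) {ε : ℝ} (hε : 0 < ε) :
    ∃ q1 q2 : ℚ, (q1:ℝ) < z ∧ z < (q2:ℝ) ∧ L q2 - L q1 < ε := by
  obtain ⟨δ, hδpos, hδ⟩ := Metric.continuousAt_iff.1 hc (ε/2) (by linarith)
  set y : ℝ := z - δ/2 with hy
  have hyz : y < z := by rw [hy]; linarith
  have hgy : envel L z - ε/2 < envel L y := by
    have : dist y z < δ := by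
      rw [Real.dist_eq, hy]
      rw [abs_of_nonpos (by linarith)]
      linarith
    have := hδ this
    rw [Real.dist_eq, abs_lt] at this
    linarith [this.1]
  obtain ⟨q1, hq1y, hq1z⟩ := exists_rat_btwn hyz
  have hLq1 : envel L y ≤ L q1 := envel_le h0 hq1y
  -- choose q2 with L q2 close to envel L z
  have hne : (L '' {q : ℚ | z < (q:ℝ)}).Nonempty := by
    obtain ⟨q, hq⟩ := exists_rat_gt z
    exact ⟨L q, ⟨q, hq, rfl⟩⟩
  have hlt : sInf (L '' {q : ℚ | z < (q:ℝ)}) < envel L z + ε/2 := by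
    have : (0:ℝ) < ε/2 := by linarith
    unfold envel
    linarith
  obtain ⟨r, ⟨q2, hq2z, rfl⟩, hq2lt⟩ := exists_lt_of_csInf_lt hne hlt
  exact ⟨q1, q2, hq1z, hq2z, by linarith⟩




lemma distF_sub (s : SignedMeasure ℝ) {y x : ℝ} (h : y ≤ x) :
    DistF s x - DistF s y = s (Set.Ioc y x) := by
  have hdisj : Disjoint (Set.Iic y) (Set.Ioc y x) := Set.Iic_disjoint_Ioc le_rfl
  have := VectorMeasure.of_union (v := (s : VectorMeasure ℝ ℝ)) hdisj measurableSet_Iic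
    measurableSet_Ioc
  rw [Set.Iic_union_Ioc_eq_Iic h] at this
  simp only [DistF]
  rw [this]
  ring

noncomputable def trap (y x δ : ℝ) : ℝ → ℝ :=
  fun t => max 0 (min ((t - y)/δ) (min 1 ((x + δ - t)/δ)))

variable {y x δ : ℝ}

lemma trap_continuous (hδ : 0 < δ) : Continuous (trap y x δ) := by
  unfold trap
  fun_prop

lemma trap_nonneg (t : ℝ) : 0 ≤ trap y x δ t := le_max_left _ _

lemma trap_le_one (t : ℝ) : trap y x δ t ≤ 1 :=
  max_le zero_le_one (le_trans (min_le_right _ _) (min_le_left _ _))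

lemma trap_eq_zero_left (hδ : 0 < δ) {t : ℝ} (ht : t ≤ y) : trap y x δ t = 0 := by
  unfold trap
  rw [max_eq_left]
  exact le_trans (min_le_left _ _) ((div_le_iff₀ hδ).2 (by linarith))

lemma trap_eq_zero_right (hδ : 0 < δ) {t : ℝ} (ht : x + δ ≤ t) : trap y x δ t = 0 := by
  unfold trap
  rw [max_eq_left]
  exact le_trans (min_le_right _ _) (le_trans (min_le_right _ _)
    ((div_le_iff₀ hδ).2 (by linarith)))

lemma trap_eq_one (hδ : 0 < δ) {t : ℝ} (h1 : y + δ ≤ t) (h2 : t ≤ x) : trap y x δ t = 1 := by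
  unfold trap
  rw [min_eq_right (le_trans (min_le_left 1 _) (by rw [le_div_iff₀ hδ]; linarith)),
    min_eq_left (by rw [le_div_iff₀ hδ]; linarith), max_eq_right zero_le_one]

lemma trap_hasCompactSupport (hδ : 0 < δ) : HasCompactSupport (trap y x δ) := by
  refine HasCompactSupport.intro (isCompact_Icc (a := y) (b := x + δ)) fun t ht => ?_
  simp only [Set.mem_Icc, not_and_or, not_le] at ht
  rcases ht with ht | ht
  · exact trap_eq_zero_left hδ (le_of_lt ht)
  · exact trap_eq_zero_right hδ (le_of_lt ht)

lemma trap_pointwise (hδ : 0 < δ) (hyx : y < x) (t : ℝ) :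
    |trap y x δ t - Set.indicator (Set.Ioc y x) (fun _ => (1:ℝ)) t| ≤
      Set.indicator (Set.Ioc y (y+δ) ∪ Set.Ioc x (x+δ)) (fun _ => (1:ℝ)) t := by
  by_cases hU : t ∈ Set.Ioc y (y+δ) ∪ Set.Ioc x (x+δ)
  · rw [Set.indicator_of_mem hU]
    have h1 := trap_nonneg (y := y) (x := x) (δ := δ) t
    have h2 := trap_le_one (y := y) (x := x) (δ := δ) t
    by_cases hI : t ∈ Set.Ioc y x
    · rw [Set.indicator_of_mem hI]
      rw [abs_le]; constructor <;> linarith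
    · rw [Set.indicator_of_notMem hI, sub_zero, abs_le]
      constructor <;> linarith
  · rw [Set.indicator_of_notMem hU]
    simp only [Set.mem_union, Set.mem_Ioc, not_or, not_and_or, not_lt, not_le] at hU
    by_cases hty : t ≤ y
    · rw [trap_eq_zero_left hδ hty, Set.indicator_of_notMem (by simp [Set.mem_Ioc]; intro h; linarith)]
      simp
    · push_neg at hty
      rcases hU with ⟨hU1, hU2⟩
      have h1 : y + δ < t := by
        rcases hU1 with h | h
        · exact absurd hty (not_lt.2 h)
        · linarith
      by_cases htx : t ≤ x
      · rw [trap_eq_one hδ (le_of_lt h1) htx, Set.indicator_of_mem (Set.mem_Ioc.2 ⟨hty, htx⟩)]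
        simp
      · push_neg at htx
        have h2 : x + δ < t := by
          rcases hU2 with h | h
          · exact absurd htx (not_lt.2 h)
          · linarith
        rw [trap_eq_zero_right hδ (le_of_lt h2),
          Set.indicator_of_notMem (by simp [Set.mem_Ioc]; intro h; linarith)]
        simp

/-- the key integral comparison for any signed measure -/
lemma sintegral_trap_close (s : SignedMeasure ℝ) (hδ : 0 < δ) (hyx : y < x) :
    |sintegral s (trap y x δ) - s (Set.Ioc y x)| ≤
      (s.totalVariation (Set.Ioc y (y+δ))).toReal + (s.totalVariation (Set.Ioc x (x+δ))).toReal := by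
  set p : Measure ℝ := s.toJordanDecomposition.posPart
  set n : Measure ℝ := s.toJordanDecomposition.negPart
  set U : Set ℝ := Set.Ioc y (y+δ) ∪ Set.Ioc x (x+δ) with hU
  have hUmeas : MeasurableSet U := (measurableSet_Ioc).union measurableSet_Ioc
  have key : ∀ m : Measure ℝ, IsFiniteMeasure m →
      |(∫ t, trap y x δ t ∂m) - (m (Set.Ioc y x)).toReal| ≤ (m U).toReal := by
    intro m hm
    have hind : ∫ t, Set.indicator (Set.Ioc y x) (fun _ => (1:ℝ)) t ∂m
        = (m (Set.Ioc y x)).toReal := by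
      rw [integral_indicator_const _ measurableSet_Ioc, smul_eq_mul, mul_one]; rfl
    have htrapint : Integrable (trap y x δ) m :=
      (trap_continuous hδ).integrable_of_hasCompactSupport (trap_hasCompactSupport hδ)
    have hindint : Integrable (Set.indicator (Set.Ioc y x) (fun _ => (1:ℝ))) m :=
      (integrable_const (1:ℝ)).indicator measurableSet_Ioc
    rw [← hind, ← integral_sub htrapint hindint]
    calc |∫ t, (trap y x δ t - Set.indicator (Set.Ioc y x) (fun _ => (1:ℝ)) t) ∂m|
        ≤ ∫ t, |trap y x δ t - Set.indicator (Set.Ioc y x) (fun _ => (1:ℝ)) t| ∂m := by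
          simpa [Real.norm_eq_abs] using norm_integral_le_integral_norm
            (μ := m) (f := fun t => trap y x δ t - Set.indicator (Set.Ioc y x) (fun _ => (1:ℝ)) t)
      _ ≤ ∫ t, Set.indicator U (fun _ => (1:ℝ)) t ∂m := by
          refine integral_mono (htrapint.sub hindint).abs
            ((integrable_const (1:ℝ)).indicator hUmeas) (trap_pointwise hδ hyx)
      _ = (m U).toReal := by rw [integral_indicator_const _ hUmeas, smul_eq_mul, mul_one]; rfl
  have hp := key p inferInstance
  have hn := key n inferInstance
  have hs : s (Set.Ioc y x) = (p (Set.Ioc y x)).toReal - (n (Set.Ioc y x)).toReal :=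
    sm_apply s measurableSet_Ioc
  have hsint : sintegral s (trap y x δ) = (∫ t, trap y x δ t ∂p) - ∫ t, trap y x δ t ∂n := rfl
  have htv : (p U).toReal + (n U).toReal = (s.totalVariation U).toReal := (tv_toReal s U).symm
  have hUb : (s.totalVariation U).toReal ≤
      (s.totalVariation (Set.Ioc y (y+δ))).toReal + (s.totalVariation (Set.Ioc x (x+δ))).toReal := by
    rw [← ENNReal.toReal_add (tv_ne_top s _) (tv_ne_top s _)]
    exact ENNReal.toReal_mono (ENNReal.add_ne_top.2 ⟨tv_ne_top s _, tv_ne_top s _⟩)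
      (measure_union_le _ _)
  calc |sintegral s (trap y x δ) - s (Set.Ioc y x)|
      ≤ |(∫ t, trap y x δ t ∂p) - (p (Set.Ioc y x)).toReal|
        + |(∫ t, trap y x δ t ∂n) - (n (Set.Ioc y x)).toReal| := by
        rw [hsint, hs]
        have : (∫ t, trap y x δ t ∂p) - ∫ t, trap y x δ t ∂n
            - ((p (Set.Ioc y x)).toReal - (n (Set.Ioc y x)).toReal)
            = ((∫ t, trap y x δ t ∂p) - (p (Set.Ioc y x)).toReal)
              - ((∫ t, trap y x δ t ∂n) - (n (Set.Ioc y x)).toReal) := by ring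
        rw [this]
        exact abs_sub _ _
    _ ≤ (p U).toReal + (n U).toReal := add_le_add hp hn
    _ = (s.totalVariation U).toReal := htv
    _ ≤ _ := hUb


lemma tv_Ioc_toReal (s : SignedMeasure ℝ) {u v : ℝ} (h : u ≤ v) :
    (s.totalVariation (Set.Ioc u v)).toReal
      = (s.totalVariation (Set.Iic v)).toReal - (s.totalVariation (Set.Iic u)).toReal := by
  have hunion : s.totalVariation (Set.Iic v)
      = s.totalVariation (Set.Iic u) + s.totalVariation (Set.Ioc u v) := by
    rw [← measure_union (Set.Iic_disjoint_Ioc le_rfl) measurableSet_Ioc,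
      Set.Iic_union_Ioc_eq_Iic h]
  rw [hunion, ENNReal.toReal_add (tv_ne_top s _) (tv_ne_top s _)]
  ring

theorem almBasic_of_loose (μ : ℕ → SignedMeasure ℝ) (ν : SignedMeasure ℝ)
    (hloose : ∀ f : ℝ → ℝ, Continuous f → Tendsto f (cocompact ℝ) (nhds 0) →
      Tendsto (fun n => sintegral (μ n) f) atTop (nhds (sintegral ν f)))
    {C : ℝ≥0∞} (hC : C ≠ ⊤) (hbd : ∀ n, (μ n).totalVariation Set.univ ≤ C) :
    AlmBasic (fun n => DistF (μ n)) (DistF ν) := by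
  intro φ hφ
  set B : ℝ := C.toReal with hB
  set G : ℕ → ℚ → ℝ := fun l q => ((μ (φ l)).totalVariation (Set.Iic (q:ℝ))).toReal with hGdef
  have hGmem : ∀ l q, G l q ∈ Set.Icc (0:ℝ) B := by
    intro l q
    refine ⟨ENNReal.toReal_nonneg, ?_⟩
    exact ENNReal.toReal_mono hC (le_trans (measure_mono (Set.subset_univ _)) (hbd _))
  obtain ⟨ψ, hψ, L, hLmem, hLtend⟩ := exists_subseq_tendsto_rat hGmem
  have hL0 : ∀ q, 0 ≤ L q := fun q => (hLmem q).1
  have hLmono : Monotone L := by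
    intro q q' hq
    refine le_of_tendsto_of_tendsto' (hLtend q) (hLtend q') fun l => ?_
    exact ENNReal.toReal_mono (tv_ne_top _ _)
      (measure_mono (Set.Iic_subset_Iic.2 (by exact_mod_cast hq)))
  set g : ℝ → ℝ := envel L with hgdef
  have hgmono : Monotone g := envel_mono hL0 hLmono
  set Gν : ℝ → ℝ := fun t => (ν.totalVariation (Set.Iic t)).toReal with hGν
  have hGνmono : Monotone Gν := fun u v huv =>
    ENNReal.toReal_mono (tv_ne_top _ _) (measure_mono (Set.Iic_subset_Iic.2 huv))
  set S : Set ℝ := {x | ¬ContinuousAt g x} ∪ {x | ¬ContinuousAt Gν x} with hSdef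
  have hScount : S.Countable :=
    (hgmono.countable_not_continuousAt).union (hGνmono.countable_not_continuousAt)
  refine ⟨ψ, hψ, S, hScount.measure_zero _, ?_⟩
  -- main convergence statement on intervals
  have main : ∀ a b : ℝ, a ∉ S → b ∉ S → a < b →
      Tendsto (fun l => (μ (φ (ψ l))) (Set.Ioc a b)) atTop (nhds (ν (Set.Ioc a b))) := by
    intro a b ha hb hab
    have hga : ContinuousAt g a := by
      by_contra h; exact ha (Or.inl h)
    have hgb : ContinuousAt g b := by
      by_contra h; exact hb (Or.inl h)
    have hνa : ContinuousAt Gν a := by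
      by_contra h; exact ha (Or.inr h)
    have hνb : ContinuousAt Gν b := by
      by_contra h; exact hb (Or.inr h)
    rw [Metric.tendsto_nhds]
    intro ε hε
    set ε0 : ℝ := ε/7 with hε0def
    have hε0 : 0 < ε0 := by rw [hε0def]; linarith
    obtain ⟨q1a, q2a, hq1a, hq2a, hqa⟩ := exists_rat_near' hL0 hLmono hga hε0
    obtain ⟨q1b, q2b, hq1b, hq2b, hqb⟩ := exists_rat_near' hL0 hLmono hgb hε0
    obtain ⟨δa, hδapos, hδa⟩ := Metric.continuousAt_iff.1 hνa ε0 hε0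
    obtain ⟨δb, hδbpos, hδb⟩ := Metric.continuousAt_iff.1 hνb ε0 hε0
    set δ : ℝ := min (min ((q2a:ℝ) - a) ((q2b:ℝ) - b)) (min (min (δa/2) (δb/2)) (b - a))
      with hδdef
    have hδpos : 0 < δ := by
      refine lt_min (lt_min (by linarith) (by linarith)) (lt_min (lt_min ?_ ?_) (by linarith))
      · linarith
      · linarith
    have hδq2a : a + δ ≤ (q2a:ℝ) := by
      have := min_le_left (min ((q2a:ℝ) - a) ((q2b:ℝ) - b)) (min (min (δa/2) (δb/2)) (b - a))
      have := le_trans this (min_le_left _ _)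
      linarith [this]
    have hδq2b : b + δ ≤ (q2b:ℝ) := by
      have h1 := min_le_left (min ((q2a:ℝ) - a) ((q2b:ℝ) - b)) (min (min (δa/2) (δb/2)) (b - a))
      have := le_trans h1 (min_le_right _ _)
      linarith [this]
    have hδδa : δ ≤ δa/2 := le_trans (min_le_right _ _) (le_trans (min_le_left _ _) (min_le_left _ _))
    have hδδb : δ ≤ δb/2 := le_trans (min_le_right _ _) (le_trans (min_le_left _ _) (min_le_right _ _))
    -- ν-side estimates
    have hνa' : (ν.totalVariation (Set.Ioc a (a+δ))).toReal < ε0 := by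
      have hd : dist (a + δ) a < δa := by
        rw [Real.dist_eq, add_sub_cancel_left, abs_of_pos hδpos]; linarith
      have := hδa hd
      rw [Real.dist_eq, abs_lt] at this
      rw [tv_Ioc_toReal ν (by linarith)]
      have h2 := this.2
      simp only [hGν] at h2 ⊢
      linarith
    have hνb' : (ν.totalVariation (Set.Ioc b (b+δ))).toReal < ε0 := by
      have hd : dist (b + δ) b < δb := by
        rw [Real.dist_eq, add_sub_cancel_left, abs_of_pos hδpos]; linarith
      have := hδb hd
      rw [Real.dist_eq, abs_lt] at this
      rw [tv_Ioc_toReal ν (by linarith)]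
      have h2 := this.2
      simp only [hGν] at h2 ⊢
      linarith
    -- μ-side eventual estimates
    have hmuEst : ∀ (q1 q2 : ℚ) (z : ℝ), (q1:ℝ) < z → z + δ ≤ (q2:ℝ) → L q2 - L q1 < ε0 →
        ∀ᶠ l in atTop, ((μ (φ (ψ l))).totalVariation (Set.Ioc z (z+δ))).toReal < 2*ε0 := by
      intro q1 q2 z hq1 hq2 hq
      have h1 := (hLtend q1).eventually (eventually_abs_sub_lt (L q1) (by linarith : (0:ℝ) < ε0/2))
      have h2 := (hLtend q2).eventually (eventually_abs_sub_lt (L q2) (by linarith : (0:ℝ) < ε0/2))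
      filter_upwards [h1, h2] with l hl1 hl2
      have hsub : Set.Ioc z (z+δ) ⊆ Set.Ioc (q1:ℝ) (q2:ℝ) :=
        Set.Ioc_subset_Ioc (le_of_lt hq1) hq2
      have hle : ((μ (φ (ψ l))).totalVariation (Set.Ioc z (z+δ))).toReal
          ≤ ((μ (φ (ψ l))).totalVariation (Set.Ioc (q1:ℝ) (q2:ℝ))).toReal :=
        ENNReal.toReal_mono (tv_ne_top _ _) (measure_mono hsub)
      have heq : ((μ (φ (ψ l))).totalVariation (Set.Ioc (q1:ℝ) (q2:ℝ))).toReal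
          = G (ψ l) q2 - G (ψ l) q1 := by
        rw [tv_Ioc_toReal _ (by exact_mod_cast le_trans (le_of_lt hq1) (by linarith : z ≤ (q2:ℝ)))]
      rw [abs_lt] at hl1 hl2
      linarith [hle, heq.le, heq.ge]
    have hEa := hmuEst q1a q2a a hq1a hδq2a hqa
    have hEb := hmuEst q1b q2b b hq1b hδq2b hqb
    -- middle estimate
    have hf := hloose (trap a b δ) (trap_continuous hδpos)
      (tendsto_cocompact_of_compactSupport (trap_hasCompactSupport hδpos))
    have hmid : Tendsto (fun l => sintegral (μ (φ (ψ l))) (trap a b δ)) atTop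
        (nhds (sintegral ν (trap a b δ))) := hf.comp ((hφ.comp hψ).tendsto_atTop)
    have hEmid := hmid.eventually (eventually_abs_sub_lt _ hε0)
    filter_upwards [hEa, hEb, hEmid] with l h1 h2 h3
    have hclose1 := sintegral_trap_close (μ (φ (ψ l))) hδpos hab
    have hclose2 := sintegral_trap_close ν hδpos hab
    rw [Real.dist_eq]
    have : |(μ (φ (ψ l))) (Set.Ioc a b) - ν (Set.Ioc a b)|
        ≤ |(μ (φ (ψ l))) (Set.Ioc a b) - sintegral (μ (φ (ψ l))) (trap a b δ)|
          + |sintegral (μ (φ (ψ l))) (trap a b δ) - sintegral ν (trap a b δ)|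
          + |sintegral ν (trap a b δ) - ν (Set.Ioc a b)| := by
      have := abs_sub_le ((μ (φ (ψ l))) (Set.Ioc a b)) (sintegral (μ (φ (ψ l))) (trap a b δ))
        (ν (Set.Ioc a b))
      have h4 := abs_sub_le (sintegral (μ (φ (ψ l))) (trap a b δ)) (sintegral ν (trap a b δ))
        (ν (Set.Ioc a b))
      linarith
    rw [abs_sub_comm] at hclose1
    calc |(μ (φ (ψ l))) (Set.Ioc a b) - ν (Set.Ioc a b)| ≤ _ := this
      _ < (2*ε0 + 2*ε0) + ε0 + (ε0 + ε0) := by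
        refine add_lt_add (add_lt_add_of_le_of_lt (le_trans hclose1 ?_) h3)
          (lt_of_le_of_lt hclose2 ?_)
        · exact add_le_add h1.le h2.le
        · exact add_lt_add hνa' hνb'
      _ = ε := by rw [hε0def]; ring
  -- assemble
  intro x hx y hy
  rcases lt_trichotomy y x with hlt | heq | hgt
  · have hrw : ∀ s : SignedMeasure ℝ, DistF s x - DistF s y = s (Set.Ioc y x) := fun s =>
      distF_sub s (le_of_lt hlt)
    simp only [hrw]
    exact main y x hy hx hlt
  · subst heq
    simp only [sub_self]
    exact tendsto_const_nhds
  · have hrw : ∀ s : SignedMeasure ℝ, DistF s x - DistF s y = -(s (Set.Ioc x y)) := fun s => by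
      rw [← distF_sub s (le_of_lt hgt)]; ring
    simp only [hrw]
    exact (main x y hx hy hgt).neg


lemma measurable_distF (s : SignedMeasure ℝ) : Measurable (DistF s) := by
  have h : DistF s = fun x => (s.toJordanDecomposition.posPart (Set.Iic x)).toReal
      - (s.toJordanDecomposition.negPart (Set.Iic x)).toReal :=
    funext fun x => sm_apply s measurableSet_Iic
  rw [h]
  have hp : Monotone fun x => (s.toJordanDecomposition.posPart (Set.Iic x)).toReal := fun u v huv =>
    ENNReal.toReal_mono (measure_ne_top _ _) (measure_mono (Set.Iic_subset_Iic.2 huv))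
  have hn : Monotone fun x => (s.toJordanDecomposition.negPart (Set.Iic x)).toReal := fun u v huv =>
    ENNReal.toReal_mono (measure_ne_top _ _) (measure_mono (Set.Iic_subset_Iic.2 huv))
  exact hp.measurable.sub hn.measurable

theorem loose_of_almBasic (μ : ℕ → SignedMeasure ℝ) (ν : SignedMeasure ℝ)
    (halm : AlmBasic (fun n => DistF (μ n)) (DistF ν))
    {C : ℝ≥0∞} (hC : C ≠ ⊤) (hbd : ∀ n, (μ n).totalVariation Set.univ ≤ C)
    {f : ℝ → ℝ} (hf : Continuous f) (h0 : Tendsto f (cocompact ℝ) (nhds 0)) :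
    Tendsto (fun n => sintegral (μ n) f) atTop (nhds (sintegral ν f)) := by
  apply tendsto_of_subseq_tendsto
  intro ns hns
  obtain ⟨ms, hms, hcompmono⟩ := strictMono_subseq_of_tendsto_atTop hns
  obtain ⟨ψ, hψ, S, hS, hconv⟩ := halm (ns ∘ ms) hcompmono
  refine ⟨fun l => ms (ψ l), ?_⟩
  -- a point outside S
  have hSne : ∃ y0, y0 ∉ S := by
    by_contra h
    push_neg at h
    have : S = Set.univ := Set.eq_univ_of_forall h
    rw [this] at hS
    simpa [Real.volume_univ] using hS
  obtain ⟨y0, hy0⟩ := hSne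
  set B : ℝ := max C.toReal (ν.totalVariation Set.univ).toReal with hBdef
  have hB0 : 0 ≤ B := le_trans ENNReal.toReal_nonneg (le_max_left _ _)
  have hBμ : ∀ n, ((μ n).totalVariation Set.univ).toReal ≤ B :=
    fun n => le_trans (ENNReal.toReal_mono hC (hbd n)) (le_max_left _ _)
  have hBν : (ν.totalVariation Set.univ).toReal ≤ B := le_max_right _ _
  rw [Metric.tendsto_nhds]
  intro ε hε
  have hε' : 0 < ε/(4*(B+1)) := by positivity
  obtain ⟨g, hg1, hgsupp, hgclose⟩ := exists_contDiff_approx hf h0 hε'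
  -- approximation bound for every signed measure with variation ≤ B
  have happrox : ∀ s : SignedMeasure ℝ, (s.totalVariation Set.univ).toReal ≤ B →
      |sintegral s f - sintegral s g| ≤ ε/4 := by
    intro s hs
    have hgc : Continuous g := hg1.continuous
    have hg0 : Tendsto g (cocompact ℝ) (nhds 0) := tendsto_cocompact_of_compactSupport hgsupp
    rw [← sintegral_sub s (integrable_parts hf h0 _) (integrable_parts hf h0 _)
      (integrable_parts hgc hg0 _) (integrable_parts hgc hg0 _)]
    calc |sintegral s (fun x => f x - g x)| ≤ (ε/(4*(B+1))) * (s.totalVariation Set.univ).toReal :=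
          sintegral_bound s hgclose
      _ ≤ (ε/(4*(B+1))) * B := by
          refine mul_le_mul_of_nonneg_left hs (le_of_lt hε')
      _ ≤ ε/4 := by
          rw [div_mul_eq_mul_div, div_le_div_iff₀ (by positivity) (by norm_num)]
          ring_nf
          nlinarith
  -- core convergence for g along the subsequence
  have hcore : Tendsto (fun l => sintegral (μ (ns (ms (ψ l)))) g) atTop
      (nhds (sintegral ν g)) := by
    have hrw : ∀ s : SignedMeasure ℝ, sintegral s g
        = - ∫ x, deriv g x * (DistF s x - DistF s y0) :=
      fun s => sintegral_ibp s hg1 hgsupp (DistF s y0)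
    simp only [hrw]
    apply Tendsto.neg
    have hcd : Continuous (deriv g) := hg1.continuous_deriv le_rfl
    have hintd : Integrable (deriv g) volume :=
      hcd.integrable_of_hasCompactSupport hgsupp.deriv
    refine tendsto_integral_of_dominated_convergence (fun x => |deriv g x| * (2*B))
      ?_ (hintd.abs.mul_const _) ?_ ?_
    · intro l
      exact (hcd.measurable.mul (((measurable_distF _).sub_const _))).aestronglyMeasurable
    · intro l
      refine ae_of_all _ fun x => ?_
      rw [Real.norm_eq_abs, abs_mul]
      refine mul_le_mul_of_nonneg_left ?_ (abs_nonneg _)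
      have h1 : |DistF (μ (ns (ms (ψ l)))) x| ≤ B := by
        refine le_trans (abs_apply_le _ measurableSet_Iic) (hBμ _)
      have h2 : |DistF (μ (ns (ms (ψ l)))) y0| ≤ B := by
        refine le_trans (abs_apply_le _ measurableSet_Iic) (hBμ _)
      calc |DistF (μ (ns (ms (ψ l)))) x - DistF (μ (ns (ms (ψ l)))) y0|
          ≤ |DistF (μ (ns (ms (ψ l)))) x| + |DistF (μ (ns (ms (ψ l)))) y0| := abs_sub _ _
        _ ≤ 2*B := by linarith
    · have hae : ∀ᵐ x ∂(volume : Measure ℝ), x ∉ S := by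
        rw [ae_iff]
        simpa using hS
      filter_upwards [hae] with x hx
      exact ((hconv x hx y0 hy0).const_mul (deriv g x))
  -- combine
  have hcoreev := hcore.eventually (eventually_abs_sub_lt _ (by linarith : (0:ℝ) < ε/4))
  filter_upwards [hcoreev] with l hl
  rw [Real.dist_eq]
  have e1 := happrox (μ (ns (ms (ψ l)))) (hBμ _)
  have e2 := happrox ν hBν
  have : |sintegral (μ (ns (ms (ψ l)))) f - sintegral ν f|
      ≤ |sintegral (μ (ns (ms (ψ l)))) f - sintegral (μ (ns (ms (ψ l)))) g|
        + |sintegral (μ (ns (ms (ψ l)))) g - sintegral ν g|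
        + |sintegral ν g - sintegral ν f| := by
    have h4 := abs_sub_le (sintegral (μ (ns (ms (ψ l)))) f) (sintegral (μ (ns (ms (ψ l)))) g)
      (sintegral ν f)
    have h5 := abs_sub_le (sintegral (μ (ns (ms (ψ l)))) g) (sintegral ν g) (sintegral ν f)
    linarith
  rw [abs_sub_comm] at e2
  calc |sintegral (μ (ns (ms (ψ l)))) f - sintegral ν f| ≤ _ := this
    _ < ε/4 + ε/4 + ε/4 := by
      exact add_lt_add_of_lt_of_le (add_lt_add_of_le_of_lt e1 hl) e2
    _ < ε := by linarith



end Stmt19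

open scoped ZeroAtInfty in
/-- A sequence of finite signed measures converges loosely to `μ` (i.e. `∫ f dμ_n →
∫ f dμ` for all continuous `f` vanishing at infinity) if and only if it converges
almost basically to `μ` and is uniformly bounded in variation. -/
theorem stmt19 (μ : ℕ → SignedMeasure ℝ) (ν : SignedMeasure ℝ) :
    (∀ f : ℝ → ℝ, Continuous f → Tendsto f (cocompact ℝ) (nhds 0) →
      Tendsto (fun n => sintegral (μ n) f) atTop (nhds (sintegral ν f))) ↔
    (AlmBasic (fun n => DistF (μ n)) (DistF ν) ∧
      ∃ C : ℝ≥0∞, C ≠ ⊤ ∧ ∀ n, (μ n).totalVariation Set.univ ≤ C) := by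
  constructor
  · intro h
    have hb : ∀ f : C₀(ℝ, ℝ), ∃ b : ℝ, Tendsto (fun n => sintegral (μ n) f) atTop (nhds b) :=
      fun f => ⟨sintegral ν f, h f f.continuous f.zero_at_infty'⟩
    obtain ⟨C', _, hC'⟩ := Stmt19.exists_norm_bound μ hb
    have hCbd : ∀ n, (μ n).totalVariation Set.univ ≤ ENNReal.ofReal (C' + 2) :=
      fun n => Stmt19.tv_le_of_bound (μ n) (fun f hf => hC' n f hf)
    exact ⟨Stmt19.almBasic_of_loose μ ν h ENNReal.ofReal_ne_top hCbd,
      ENNReal.ofReal (C' + 2), ENNReal.ofReal_ne_top, hCbd⟩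
  · rintro ⟨halm, C, hC, hbd⟩ f hf h0
    exact Stmt19.loose_of_almBasic μ ν halm hC hbd hf h0
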